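/- Let ν : F × F → ℕ be finitely supported on a finite set F², let w : F × F → ℂ, and let r ≥ 1 be an integer. Then |∑_{u₁,u₂} ν(u₁,u₂)·w(u₁,u₂)| ≤ (∑ ν)^{1−1/r} · (∑ ν²)^{1/(2r)} · (∑ |w|^{2r})^{1/(2r)}. -/

import Mathlib

/-!
Weighted Hölder (the power-mean inequality for the weights `ν`) gives
`∑ ν f ≤ (∑ ν)^(1 - 1/p) (∑ ν f^p)^(1/p)`, and Cauchy–Schwarz splits the last sum as
`∑ ν f^p ≤ (∑ ν²)^(1/2) (∑ f^(2p))^(1/2)`.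
-/

open Finset

theorem Real.sum_mul_rpow_le_sqrt_mul_sqrt {ι : Type*} (s : Finset ι) (p : ℝ) (ν f : ι → ℝ)
    (hf : ∀ i, 0 ≤ f i) :
    ∑ i ∈ s, ν i * f i ^ p ≤ √(∑ i ∈ s, ν i ^ 2) * √(∑ i ∈ s, f i ^ (2 * p)) := by
  have hsq : ∀ i, (f i ^ p) ^ 2 = f i ^ (2 * p) := fun i => by
    rw [← Real.rpow_natCast, ← Real.rpow_mul (hf i), mul_comm]
    norm_num
  simpa only [hsq] using Real.sum_mul_le_sqrt_mul_sqrt s ν (fun i => f i ^ p)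

theorem Real.inner_le_weight_mul_L2_mul_L2p_of_nonneg {ι : Type*} (s : Finset ι) {p : ℝ}
    (hp : 1 ≤ p) (ν f : ι → ℝ) (hν : ∀ i, 0 ≤ ν i) (hf : ∀ i, 0 ≤ f i) :
    ∑ i ∈ s, ν i * f i
      ≤ (∑ i ∈ s, ν i) ^ (1 - 1 / p) * (∑ i ∈ s, ν i ^ 2) ^ (1 / (2 * p)) *
        (∑ i ∈ s, f i ^ (2 * p)) ^ (1 / (2 * p)) := by
  have hνsq : 0 ≤ ∑ i ∈ s, ν i ^ 2 := sum_nonneg fun i _ => sq_nonneg _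
  have hf2p : 0 ≤ ∑ i ∈ s, f i ^ (2 * p) := sum_nonneg fun i _ => Real.rpow_nonneg (hf i) _
  have hsqrt_rpow : ∀ {x : ℝ}, 0 ≤ x → √x ^ p⁻¹ = x ^ (1 / (2 * p)) := fun hx => by
    rw [Real.sqrt_eq_rpow, ← Real.rpow_mul hx]
    ring_nf
  have hholder := inner_le_weight_mul_Lp_of_nonneg s hp ν f hν hf
  have hcs := Real.sum_mul_rpow_le_sqrt_mul_sqrt s p ν f hf
  calc ∑ i ∈ s, ν i * f i
      ≤ (∑ i ∈ s, ν i) ^ (1 - p⁻¹) * (∑ i ∈ s, ν i * f i ^ p) ^ p⁻¹ := hholder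
    _ ≤ (∑ i ∈ s, ν i) ^ (1 - p⁻¹) * (√(∑ i ∈ s, ν i ^ 2) * √(∑ i ∈ s, f i ^ (2 * p))) ^ p⁻¹ := by
        gcongr
        · exact Real.rpow_nonneg (sum_nonneg fun i _ => hν i) _
        · exact sum_nonneg fun i _ => mul_nonneg (hν i) (Real.rpow_nonneg (hf i) _)
    _ = _ := by
        rw [Real.mul_rpow (Real.sqrt_nonneg _) (Real.sqrt_nonneg _), hsqrt_rpow hνsq,
          hsqrt_rpow hf2p, one_div p, mul_assoc]

theorem stmt_14 {F : Type*} [Fintype F] (ν : F × F → ℕ) (w : F × F → ℂ)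
    (r : ℕ) (hr : 1 ≤ r) :
    ‖∑ u : F × F, (ν u : ℂ) * w u‖
      ≤ (∑ u : F × F, (ν u : ℝ)) ^ (1 - 1 / (r : ℝ)) *
        (∑ u : F × F, (ν u : ℝ) ^ 2) ^ (1 / (2 * (r : ℝ))) *
        (∑ u : F × F, ‖w u‖ ^ (2 * r)) ^ (1 / (2 * (r : ℝ))) := by
  have htriangle : ‖∑ u : F × F, (ν u : ℂ) * w u‖ ≤ ∑ u : F × F, (ν u : ℝ) * ‖w u‖ :=
    (norm_sum_le _ _).trans_eq (sum_congr rfl fun u _ => by rw [norm_mul, Complex.norm_natCast])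
  have hholder := Real.inner_le_weight_mul_L2_mul_L2p_of_nonneg univ (Nat.one_le_cast.2 hr)
    (fun u => (ν u : ℝ)) (fun u => ‖w u‖) (fun u => Nat.cast_nonneg _) (fun u => norm_nonneg _)
  have hnat : ∀ u, ‖w u‖ ^ (2 * (r : ℝ)) = ‖w u‖ ^ (2 * r) := fun u => by
    exact_mod_cast Real.rpow_natCast ‖w u‖ (2 * r)
  simp only [hnat] at hholder
  exact htriangle.trans hholder
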